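/- arXiv:1412.5813 — 3 statements merged into one kernel-verified Lean document; each statement's English description precedes it below -/
import Mathlib

section
/- For a unit quaternion q, the matrix exponential of -Γ(h/2)·J(q), where J(q) = (M/4) S(q) D S(q)^T, equals q q^T + Σ_{l=1}^3 e^{-Γ M h/(8 I_l)} (S_l q)(S_l q)^T. In particular, restricted to the orthogonal complement of q it is given by Σ_{l=1}^3 e^{-Γ M h/(8 I_l)} (S_l q)(S_l q)^T. -/
open Matrix Real

noncomputable section

def S1 : Matrix (Fin 4) (Fin 4) ℝ := !![0,-1,0,0; 1,0,0,0; 0,0,0,1; 0,0,-1,0]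
def S2 : Matrix (Fin 4) (Fin 4) ℝ := !![0,0,-1,0; 0,0,0,-1; 1,0,0,0; 0,1,0,0]
def S3 : Matrix (Fin 4) (Fin 4) ℝ := !![0,0,0,-1; 0,0,1,0; 0,-1,0,0; 1,0,0,0]

/-- `S(q)`: the 4×4 matrix with columns `q, S₁q, S₂q, S₃q`. -/
def Smat (q : Fin 4 → ℝ) : Matrix (Fin 4) (Fin 4) ℝ :=
  Matrix.of fun i j => ![q, S1.mulVec q, S2.mulVec q, S3.mulVec q] j i

/-! For a unit quaternion `q` the matrix `S(q)` is orthogonal, so `J(q) = (M/4) S(q) D S(q)ᵀ` is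
diagonalised by it and `exp (-Γ (h/2) J(q)) = S(q) exp (-Γ (h/2) (M/4) D) S(q)ᵀ`. Expanding this
column by column gives the rank-one sum; the `q qᵀ` term, coming from the zero entry of `D`,
annihilates the orthogonal complement of `q`. -/

namespace Matrix

variable {m n 𝔸 : Type*}

theorem mul_diagonal_mul_transpose [Fintype n] [DecidableEq n] [CommSemiring 𝔸]
    (A : Matrix m n 𝔸) (w : n → 𝔸) :
    A * diagonal w * Aᵀ = ∑ j, w j • vecMulVec (Aᵀ j) (Aᵀ j) := by
  ext i k
  simp only [mul_apply, diagonal_apply, mul_ite, mul_zero, Finset.sum_ite_eq', Finset.mem_univ,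
    if_true, transpose_apply, sum_apply, smul_apply, vecMulVec_apply, smul_eq_mul]
  exact Finset.sum_congr rfl fun j _ => by ring

theorem exp_conj_of_transpose_mul_self [Fintype n] [DecidableEq n] [NormedCommRing 𝔸]
    [NormedAlgebra ℚ 𝔸] [CompleteSpace 𝔸] {U : Matrix n n 𝔸} (hU : Uᵀ * U = 1)
    (A : Matrix n n 𝔸) :
    NormedSpace.exp (U * A * Uᵀ) = U * NormedSpace.exp A * Uᵀ :=
  exp_units_conj ⟨U, Uᵀ, mul_eq_one_comm.mp hU, hU⟩ A

theorem exp_conj_diagonal [Fintype n] [DecidableEq n] {U : Matrix n n ℝ}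
    (hU : Uᵀ * U = 1) (w : n → ℝ) :
    NormedSpace.exp (U * diagonal w * Uᵀ) = ∑ j, Real.exp (w j) • vecMulVec (Uᵀ j) (Uᵀ j) := by
  rw [exp_conj_of_transpose_mul_self hU, exp_diagonal, mul_diagonal_mul_transpose]
  simp only [Pi.coe_exp, Real.exp_eq_exp_ℝ]

end Matrix

theorem transpose_Smat (q : Fin 4 → ℝ) : (Smat q)ᵀ = ![q, S1 *ᵥ q, S2 *ᵥ q, S3 *ᵥ q] := rfl

theorem transpose_Smat_mul_Smat (q : Fin 4 → ℝ) : (Smat q)ᵀ * Smat q = (q ⬝ᵥ q) • 1 := by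
  ext i j
  fin_cases i <;> fin_cases j <;>
    simp [Smat, S1, S2, S3, mul_apply, dotProduct, Fin.sum_univ_four] <;> ring

theorem exp_damping_matrix_general (q : Fin 4 → ℝ) (hq : q ⬝ᵥ q = 1)
    (Γ M h I1 I2 I3 : ℝ) :
    NormedSpace.exp ((-(Γ * (h / 2))) •
        ((M / 4) • (Smat q * Matrix.diagonal ![0, 1 / I1, 1 / I2, 1 / I3] * (Smat q)ᵀ))) =
      Matrix.vecMulVec q q +
        (Real.exp (-(Γ * M * h) / (8 * I1)) • Matrix.vecMulVec (S1.mulVec q) (S1.mulVec q) +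
         Real.exp (-(Γ * M * h) / (8 * I2)) • Matrix.vecMulVec (S2.mulVec q) (S2.mulVec q) +
         Real.exp (-(Γ * M * h) / (8 * I3)) • Matrix.vecMulVec (S3.mulVec q) (S3.mulVec q)) ∧
    ∀ piv : Fin 4 → ℝ, q ⬝ᵥ piv = 0 →
      (NormedSpace.exp ((-(Γ * (h / 2))) •
          ((M / 4) • (Smat q * Matrix.diagonal ![0, 1 / I1, 1 / I2, 1 / I3] *
            (Smat q)ᵀ)))).mulVec piv =
      (Real.exp (-(Γ * M * h) / (8 * I1)) • Matrix.vecMulVec (S1.mulVec q) (S1.mulVec q) +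
       Real.exp (-(Γ * M * h) / (8 * I2)) • Matrix.vecMulVec (S2.mulVec q) (S2.mulVec q) +
       Real.exp (-(Γ * M * h) / (8 * I3)) • Matrix.vecMulVec (S3.mulVec q) (S3.mulVec q)).mulVec piv := by
  have hS : (Smat q)ᵀ * Smat q = 1 := by rw [transpose_Smat_mul_Smat, hq, one_smul]
  have hrate (I : ℝ) : -(Γ * (h / 2)) * (M / 4) * (1 / I) = -(Γ * M * h) / (8 * I) := by ring
  rw [smul_smul, ← Matrix.smul_mul, ← Matrix.mul_smul, ← diagonal_smul, exp_conj_diagonal hS,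
    Fin.sum_univ_four, transpose_Smat]
  simp only [Pi.smul_apply, smul_eq_mul, Matrix.cons_val, mul_zero, Real.exp_zero, one_smul,
    hrate, add_assoc, true_and]
  intro piv hpiv
  rw [add_mulVec, vecMulVec_mulVec, hpiv, MulOpposite.op_zero, zero_smul, zero_add]

/-- the matrix exponential of `-Γ(h/2) J(q)`, with
`J(q) = (M/4) S(q) D S(q)ᵀ`, equals `q qᵀ + Σ_l e^{-ΓMh/(8 I_l)} (S_l q)(S_l q)ᵀ`;
in particular on the orthogonal complement of `q` it acts as
`Σ_l e^{-ΓMh/(8 I_l)} (S_l q)(S_l q)ᵀ`. -/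
theorem exp_damping_matrix (q : Fin 4 → ℝ) (hq : q ⬝ᵥ q = 1)
    (Γ M h I1 I2 I3 : ℝ) (hΓ : 0 < Γ) (hM : 0 < M) (hh : 0 < h)
    (hI1 : 0 < I1) (hI2 : 0 < I2) (hI3 : 0 < I3) :
    NormedSpace.exp ((-(Γ * (h / 2))) •
        ((M / 4) • (Smat q * Matrix.diagonal ![0, 1 / I1, 1 / I2, 1 / I3] * (Smat q)ᵀ))) =
      Matrix.vecMulVec q q +
        (Real.exp (-(Γ * M * h) / (8 * I1)) • Matrix.vecMulVec (S1.mulVec q) (S1.mulVec q) +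
         Real.exp (-(Γ * M * h) / (8 * I2)) • Matrix.vecMulVec (S2.mulVec q) (S2.mulVec q) +
         Real.exp (-(Γ * M * h) / (8 * I3)) • Matrix.vecMulVec (S3.mulVec q) (S3.mulVec q)) ∧
    ∀ piv : Fin 4 → ℝ, q ⬝ᵥ piv = 0 →
      (NormedSpace.exp ((-(Γ * (h / 2))) •
          ((M / 4) • (Smat q * Matrix.diagonal ![0, 1 / I1, 1 / I2, 1 / I3] *
            (Smat q)ᵀ)))).mulVec piv =
      (Real.exp (-(Γ * M * h) / (8 * I1)) • Matrix.vecMulVec (S1.mulVec q) (S1.mulVec q) +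
       Real.exp (-(Γ * M * h) / (8 * I2)) • Matrix.vecMulVec (S2.mulVec q) (S2.mulVec q) +
       Real.exp (-(Γ * M * h) / (8 * I3)) • Matrix.vecMulVec (S3.mulVec q) (S3.mulVec q)).mulVec piv :=
  exp_damping_matrix_general q hq Γ M h I1 I2 I3
end
end

section
/- For l ∈ {1,2,3}, the flow Ψ_{t,l} is the exact solution of the Hamiltonian system dq/dt = ∇_π V_l(q,π), dπ/dt = -∇_q V_l(q,π) with V_l(q,π) = (1/(8 I_l)) (π^T S_l q)^2; that is, the curves Q(t) = cos(χ_l t) q + sin(χ_l t) S_l q, Π(t) = cos(χ_l t) π + sin(χ_l t) S_l π satisfy Q'(t) = (1/(4 I_l)) (Π(t)^T S_l Q(t)) S_l Q(t) and Π'(t) = (1/(4 I_l)) (Π(t)^T S_l Q(t)) S_l Π(t). -/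
open Matrix Real

noncomputable section

/-!
Since `S` is skew-symmetric with `S² = -1`, the curve `cos (χ t) • v + sin (χ t) • S v` solves the
linear equation `x' = χ • S x`, and the rotations `Q(t)`, `Π(t)` preserve `Πᵀ S Q`. Hence the
coefficient `(1 / (4 Iₗ)) Π(t)ᵀ S Q(t)` of the Hamiltonian vector field along the curves is the
constant `χ`, and the Hamiltonian equations reduce to that linear equation.
-/

theorem transpose_eq_neg_and_mul_self_eq_neg_one {S : Matrix (Fin 4) (Fin 4) ℝ}
    (hS : S = S1 ∨ S = S2 ∨ S = S3) : Sᵀ = -S ∧ S * S = -1 := by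
  rcases hS with rfl | rfl | rfl <;> constructor <;> ext i j <;> fin_cases i <;> fin_cases j <;>
    simp [S1, S2, S3, mul_apply, Fin.sum_univ_four]

section SkewComplexStructure

variable {n R : Type*} [Fintype n] [CommRing R] {S : Matrix n n R}

theorem dotProduct_mulVec_of_transpose_eq_neg (hT : Sᵀ = -S) (u v : n → R) :
    u ⬝ᵥ S *ᵥ v = -(S *ᵥ u ⬝ᵥ v) := by
  rw [dotProduct_mulVec, ← mulVec_transpose, hT, neg_mulVec, neg_dotProduct]

variable [DecidableEq n]

theorem mulVec_mulVec_of_mul_self_eq_neg_one (hsq : S * S = -1) (v : n → R) :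
    S *ᵥ (S *ᵥ v) = -v := by
  rw [mulVec_mulVec, hsq, neg_mulVec, one_mulVec]

theorem mulVec_dotProduct_mulVec_of_transpose_eq_neg (hT : Sᵀ = -S) (hsq : S * S = -1)
    (u v : n → R) : S *ᵥ u ⬝ᵥ S *ᵥ v = u ⬝ᵥ v := by
  rw [← neg_neg (S *ᵥ u ⬝ᵥ S *ᵥ v), ← dotProduct_mulVec_of_transpose_eq_neg hT,
    mulVec_mulVec_of_mul_self_eq_neg_one hsq, dotProduct_neg, neg_neg]

theorem rotate_dotProduct_mulVec_rotate (hT : Sᵀ = -S) (hsq : S * S = -1) (p q : n → R)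
    (c s : R) :
    (c • p + s • S *ᵥ p) ⬝ᵥ S *ᵥ (c • q + s • S *ᵥ q) = (c ^ 2 + s ^ 2) * (p ⬝ᵥ S *ᵥ q) := by
  simp only [mulVec_add, mulVec_smul, mulVec_mulVec_of_mul_self_eq_neg_one hsq, add_dotProduct,
    dotProduct_add, smul_dotProduct, dotProduct_smul, dotProduct_neg, smul_eq_mul,
    mulVec_dotProduct_mulVec_of_transpose_eq_neg hT hsq, dotProduct_mulVec_of_transpose_eq_neg hT p]
  ring

end SkewComplexStructure

theorem hasDerivAt_cos_smul_add_sin_smul_mulVec {n : Type*} [Fintype n] [DecidableEq n]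
    {S : Matrix n n ℝ} (hsq : S * S = -1) (χ : ℝ) (v : n → ℝ) (t : ℝ) :
    HasDerivAt (fun t => cos (χ * t) • v + sin (χ * t) • S *ᵥ v)
      (χ • S *ᵥ (cos (χ * t) • v + sin (χ * t) • S *ᵥ v)) t := by
  have hlin : HasDerivAt (fun t => χ * t) χ t := by simpa using (hasDerivAt_id t).const_mul χ
  refine ((hlin.cos.smul_const v).add (hlin.sin.smul_const (S *ᵥ v))).congr_deriv ?_
  rw [mulVec_add, mulVec_smul, mulVec_smul, mulVec_mulVec_of_mul_self_eq_neg_one hsq]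
  module

theorem Psi_solves_Hamiltonian_general (S : Matrix (Fin 4) (Fin 4) ℝ)
    (hS : S = S1 ∨ S = S2 ∨ S = S3) (Il : ℝ)
    (q piv : Fin 4 → ℝ) :
    let χ : ℝ := (1 / (4 * Il)) * (piv ⬝ᵥ S.mulVec q)
    let Q : ℝ → (Fin 4 → ℝ) := fun t => Real.cos (χ * t) • q + Real.sin (χ * t) • S.mulVec q
    let Piv : ℝ → (Fin 4 → ℝ) := fun t => Real.cos (χ * t) • piv + Real.sin (χ * t) • S.mulVec piv
    ∀ t : ℝ,
      HasDerivAt Q (((1 / (4 * Il)) * (Piv t ⬝ᵥ S.mulVec (Q t))) • S.mulVec (Q t)) t ∧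
      HasDerivAt Piv (((1 / (4 * Il)) * (Piv t ⬝ᵥ S.mulVec (Q t))) • S.mulVec (Piv t)) t := by
  intro χ Q Piv t
  obtain ⟨hT, hsq⟩ := transpose_eq_neg_and_mul_self_eq_neg_one hS
  have hχ : (1 / (4 * Il)) * (Piv t ⬝ᵥ S *ᵥ Q t) = χ := by
    rw [rotate_dotProduct_mulVec_rotate hT hsq, cos_sq_add_sin_sq, one_mul]
  rw [hχ]
  exact ⟨hasDerivAt_cos_smul_add_sin_smul_mulVec hsq χ q t,
    hasDerivAt_cos_smul_add_sin_smul_mulVec hsq χ piv t⟩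

/-- the curves `Q(t), Piv(t)` of `Ψ_{t,l}` solve the Hamiltonian system
for `V_l(q,piv) = (1/(8 I_l)) (pivᵀ S_l q)²`:
`Q'(t) = (1/(4 I_l)) (Piv(t)ᵀ S_l Q(t)) S_l Q(t)` and
`Piv'(t) = (1/(4 I_l)) (Piv(t)ᵀ S_l Q(t)) S_l Piv(t)`. -/
theorem Psi_solves_Hamiltonian (S : Matrix (Fin 4) (Fin 4) ℝ)
    (hS : S = S1 ∨ S = S2 ∨ S = S3) (Il : ℝ) (hIl : 0 < Il)
    (q piv : Fin 4 → ℝ) :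
    let χ : ℝ := (1 / (4 * Il)) * (piv ⬝ᵥ S.mulVec q)
    let Q : ℝ → (Fin 4 → ℝ) := fun t => Real.cos (χ * t) • q + Real.sin (χ * t) • S.mulVec q
    let Piv : ℝ → (Fin 4 → ℝ) := fun t => Real.cos (χ * t) • piv + Real.sin (χ * t) • S.mulVec piv
    ∀ t : ℝ,
      HasDerivAt Q (((1 / (4 * Il)) * (Piv t ⬝ᵥ S.mulVec (Q t))) • S.mulVec (Q t)) t ∧
      HasDerivAt Piv (((1 / (4 * Il)) * (Piv t ⬝ᵥ S.mulVec (Q t))) • S.mulVec (Piv t)) t :=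
  Psi_solves_Hamiltonian_general S hS Il q piv
end
end

section
/- (Rodrigues formula for 4×4 skew-symmetric matrices) Let A be the skew-symmetric matrix parameterized by u_1,...,u_6, with a_2 = Σ u_i^2, a_0 = (u_1 u_6 + u_3 u_4 - u_2 u_5)^2, δ = sqrt(a_2^2 - 4 a_0), α = sqrt((a_2 - δ)/2), μ = sqrt((a_2 + δ)/2). If δ > 0 and α > 0, then exp(A) = cos(μ) I + (sin(μ)/μ) A + (aA + bI)(A^2 + μ^2 I), where a = (sin α/α − sin μ/μ)/δ and b = (cos α − cos μ)/δ. -/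
/-!
The matrix `A` is annihilated by `(X² + α²)(X² + μ²)` with `α² ≠ μ²`. Hence
`P = (A² + μ²)/(μ² - α²)` and `Q = 1 - P` satisfy `A² P = -α² P` and `A² Q = -μ² Q`, so multiplying
the exponential series termwise by `P` (resp. `Q`) gives the cosine and sine series at `α`
(resp. `μ`). Since `P + Q = 1`, the two series add up to the exponential series itself, so
`exp A = cos α P + (sin α / α) A P + cos μ Q + (sin μ / μ) A Q`, which
rearranges to the stated formula.
-/

open Matrix Real

noncomputable section

/-- The general real skew-symmetric 4×4 matrix parameterized by `u₁,…,u₆`. -/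
def skewA (u1 u2 u3 u4 u5 u6 : ℝ) : Matrix (Fin 4) (Fin 4) ℝ :=
  !![0, u6, u5, u3; -u6, 0, u4, u2; -u5, -u4, 0, u1; -u3, -u2, -u1, 0]

open scoped Nat

theorem pow_two_mul_mul_eq_of_mul_self_mul_eq {R 𝔸 : Type*} [CommSemiring R] [Semiring 𝔸]
    [Algebra R 𝔸] {A P : 𝔸} {c : R} (h : A * A * P = c • P) (k : ℕ) :
    A ^ (2 * k) * P = c ^ k • P := by
  induction k with
  | zero => simp
  | succ k ih =>
    rw [mul_add, mul_one, pow_add, pow_two, mul_assoc, h, mul_smul_comm, ih, smul_smul, pow_succ,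
      mul_comm c]

section Exponential

variable {𝔸 : Type*} [Ring 𝔸] [Algebra ℝ 𝔸] [TopologicalSpace 𝔸] [IsTopologicalRing 𝔸]
  [ContinuousSMul ℝ 𝔸]

theorem hasSum_expSeries_mul_of_mul_self_mul_eq {A P : 𝔸} {t : ℝ} (ht : t ≠ 0)
    (h : A * A * P = -(t ^ 2) • P) :
    HasSum (fun n => ((n ! : ℝ)⁻¹ • A ^ n) * P) (cos t • P + (sin t / t) • (A * P)) := by
  have hpow (k : ℕ) : (-(t ^ 2)) ^ k = (-1) ^ k * t ^ (2 * k) := by rw [neg_pow, pow_mul]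
  refine HasSum.even_add_odd ?_ ?_
  · convert (hasSum_cos t).smul_const P using 2 with k
    rw [smul_mul_assoc, pow_two_mul_mul_eq_of_mul_self_mul_eq h, smul_smul, hpow]
    congr 1
    ring
  · convert ((hasSum_sin t).div_const t).smul_const (A * P) using 2 with k
    rw [smul_mul_assoc, pow_succ', mul_assoc, pow_two_mul_mul_eq_of_mul_self_mul_eq h,
      mul_smul_comm, smul_smul, hpow]
    congr 1
    field_simp
    ring

variable [T2Space 𝔸]

theorem exp_eq_of_mul_self_mul_eq_of_add_eq_one {A P Q : 𝔸} {α μ : ℝ}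
    (hα : α ≠ 0) (hμ : μ ≠ 0) (hPQ : P + Q = 1)
    (hP : A * A * P = -(α ^ 2) • P) (hQ : A * A * Q = -(μ ^ 2) • Q) :
    NormedSpace.exp A =
      cos α • P + (sin α / α) • (A * P) + (cos μ • Q + (sin μ / μ) • (A * Q)) := by
  rw [NormedSpace.exp_eq_tsum ℝ]
  convert ((hasSum_expSeries_mul_of_mul_self_mul_eq hα hP).add
    (hasSum_expSeries_mul_of_mul_self_mul_eq hμ hQ)).tsum_eq using 2
  ext n
  rw [← mul_add, hPQ, mul_one]

theorem exp_eq_of_sq_add_sq_mul_sq_add_sq_eq_zero {A : 𝔸} {α μ : ℝ}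
    (hα : α ≠ 0) (hμ : μ ≠ 0) (hαμ : μ ^ 2 - α ^ 2 ≠ 0)
    (hA : (A * A + α ^ 2 • 1) * (A * A + μ ^ 2 • 1) = 0) :
    NormedSpace.exp A = cos μ • 1 + (sin μ / μ) • A +
      (((sin α / α - sin μ / μ) / (μ ^ 2 - α ^ 2)) • A +
        ((cos α - cos μ) / (μ ^ 2 - α ^ 2)) • 1) * (A * A + μ ^ 2 • 1) := by
  set d := μ ^ 2 - α ^ 2
  set B := A * A + α ^ 2 • (1 : 𝔸)
  set C := A * A + μ ^ 2 • (1 : 𝔸)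
  have hAB : A * A = B - α ^ 2 • 1 := by simp [B]
  have hAC : A * A = C - μ ^ 2 • 1 := by simp [C]
  have hB : B = C - d • 1 := by simp only [B, C, d, sub_smul]; abel
  have hCB : C * B = 0 := by
    rw [← hA, hB, sub_mul, mul_sub, smul_mul_assoc, mul_smul_comm, one_mul, mul_one]
  have hP : A * A * (d⁻¹ • C) = -(α ^ 2) • (d⁻¹ • C) := by
    rw [mul_smul_comm, hAB, sub_mul, hA, smul_mul_assoc, one_mul]
    module
  have hQ : A * A * (-d⁻¹ • B) = -(μ ^ 2) • (-d⁻¹ • B) := by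
    rw [mul_smul_comm, hAC, sub_mul, hCB, smul_mul_assoc, one_mul]
    module
  have hPQ : d⁻¹ • C + -d⁻¹ • B = (1 : 𝔸) := by
    rw [hB, neg_smul, ← smul_neg, ← smul_add, neg_sub, add_sub_cancel, smul_smul,
      inv_mul_cancel₀ hαμ, one_smul]
  rw [exp_eq_of_mul_self_mul_eq_of_add_eq_one hα hμ hPQ hP hQ, hB]
  simp only [mul_smul_comm, mul_sub, mul_one, add_mul, smul_mul_assoc, one_mul]
  match_scalars <;> field_simp <;> ring

end Exponential

theorem skewA_cayley_hamilton (u1 u2 u3 u4 u5 u6 : ℝ) :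
    skewA u1 u2 u3 u4 u5 u6 * skewA u1 u2 u3 u4 u5 u6 *
        (skewA u1 u2 u3 u4 u5 u6 * skewA u1 u2 u3 u4 u5 u6) +
      (u1 ^ 2 + u2 ^ 2 + u3 ^ 2 + u4 ^ 2 + u5 ^ 2 + u6 ^ 2) •
        (skewA u1 u2 u3 u4 u5 u6 * skewA u1 u2 u3 u4 u5 u6) +
      (u1 * u6 + u3 * u4 - u2 * u5) ^ 2 • (1 : Matrix (Fin 4) (Fin 4) ℝ) = 0 := by
  simp [skewA, ← Matrix.ext_iff, Fin.forall_fin_succ]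
  and_intros <;> ring

/-- Rodrigues formula for the exponential of a real skew-symmetric
4×4 matrix: if `δ > 0` and `α > 0`, then
`exp(A) = cos(μ) I + (sin μ/μ) A + (aA + bI)(A² + μ² I)` with
`a = (sin α/α − sin μ/μ)/δ`, `b = (cos α − cos μ)/δ`. -/
theorem rodrigues_formula (u1 u2 u3 u4 u5 u6 : ℝ)
    (a2 a0 δ α μ a b : ℝ)
    (ha2 : a2 = u1 ^ 2 + u2 ^ 2 + u3 ^ 2 + u4 ^ 2 + u5 ^ 2 + u6 ^ 2)
    (ha0 : a0 = (u1 * u6 + u3 * u4 - u2 * u5) ^ 2)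
    (hδ : δ = Real.sqrt (a2 ^ 2 - 4 * a0))
    (hα : α = Real.sqrt ((a2 - δ) / 2))
    (hμ : μ = Real.sqrt ((a2 + δ) / 2))
    (hδpos : 0 < δ) (hαpos : 0 < α)
    (ha : a = (Real.sin α / α - Real.sin μ / μ) / δ)
    (hb : b = (Real.cos α - Real.cos μ) / δ) :
    NormedSpace.exp (skewA u1 u2 u3 u4 u5 u6) =
      Real.cos μ • (1 : Matrix (Fin 4) (Fin 4) ℝ) +
        (Real.sin μ / μ) • skewA u1 u2 u3 u4 u5 u6 +
        (a • skewA u1 u2 u3 u4 u5 u6 + b • (1 : Matrix (Fin 4) (Fin 4) ℝ)) *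
          (skewA u1 u2 u3 u4 u5 u6 * skewA u1 u2 u3 u4 u5 u6 +
            (μ ^ 2) • (1 : Matrix (Fin 4) (Fin 4) ℝ)) := by
  have hδsq : δ ^ 2 = a2 ^ 2 - 4 * a0 := by
    rw [hδ, sq_sqrt (sqrt_pos.mp (hδ ▸ hδpos)).le]
  have hαsq : α ^ 2 = (a2 - δ) / 2 := by
    rw [hα, sq_sqrt (sqrt_pos.mp (hα ▸ hαpos)).le]
  have hμsq : μ ^ 2 = (a2 + δ) / 2 := by rw [hμ, sq_sqrt (by linarith [pow_pos hαpos 2])]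
  have hμpos : 0 < μ := by rw [hμ]; exact sqrt_pos.mpr (by linarith [pow_pos hαpos 2])
  have hδ_eq : δ = μ ^ 2 - α ^ 2 := by rw [hαsq, hμsq]; ring
  have hsum : α ^ 2 + μ ^ 2 = a2 := by rw [hαsq, hμsq]; ring
  have hprod : α ^ 2 * μ ^ 2 = a0 := by rw [hαsq, hμsq]; linear_combination (-1 / 4 : ℝ) * hδsq
  have hfactor : (skewA u1 u2 u3 u4 u5 u6 * skewA u1 u2 u3 u4 u5 u6 + α ^ 2 • 1) *
      (skewA u1 u2 u3 u4 u5 u6 * skewA u1 u2 u3 u4 u5 u6 + μ ^ 2 • 1) = 0 := by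
    rw [← skewA_cayley_hamilton, ← ha2, ← ha0, ← hsum, ← hprod]
    simp only [add_mul, mul_add, smul_mul_assoc, mul_smul_comm, one_mul, mul_one]
    module
  rw [ha, hb, hδ_eq]
  exact exp_eq_of_sq_add_sq_mul_sq_add_sq_eq_zero hαpos.ne' hμpos.ne' (hδ_eq ▸ hδpos.ne') hfactor
end
end
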